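/- Let a,b > 0 and let u be continuous on cl(Ω), harmonic in Ω, C¹ on cl(Ω) minus the vertices of Γ with the mixed boundary data (a,b) on the open sides of Γ. Suppose that for some δ > 0 and c ≠ 0 one has u = c·ρ₁^{2/3}cos(2θ₁/3) + w on Ω ∩ B(S₁,δ), where w is C¹ on cl(Ω ∩ B(S₁,δ)) with w_x(S₁) < 0 and w_y(S₁) < 0. Then Berg's effect fails: if c > 0 there exists δ₁ > 0 such that u_x(x,r₂) > 0 (hence x·u_x(x,r₂) > 0) for all x ∈ (r₁−δ₁, r₁), and if c < 0 there exists δ₁ > 0 such that u_y(r₁,y) > 0 (hence y·u_y(r₁,y) > 0) for all y ∈ (r₂−δ₁, r₂). -/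

import Mathlib

open Set Real MeasureTheory

/-- Partial derivative in the `x` direction. -/
noncomputable def pdx (u : ℝ × ℝ → ℝ) (p : ℝ × ℝ) : ℝ := fderiv ℝ u p (1, 0)

/-- Partial derivative in the `y` direction. -/
noncomputable def pdy (u : ℝ × ℝ → ℝ) (p : ℝ × ℝ) : ℝ := fderiv ℝ u p (0, 1)

/-- Open rectangle `(-s,s) × (-t,t)`. -/
def Rect (s t : ℝ) : Set (ℝ × ℝ) := Ioo (-s) s ×ˢ Ioo (-t) t

/-- The domain `Ω = R₂ \ cl
 R₁` where `R₁ = (-r₁,r₁)×(-r₂,r₂)` and `R₂ = l • R₁`. -/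
def Dom (r₁ r₂ l : ℝ) : Set (ℝ × ℝ) :=
  Rect (l * r₁) (l * r₂) \ (Icc (-r₁) r₁ ×ˢ Icc (-r₂) r₂)

/-- The four vertices `S₁, S₂, S₃, S₄` of the inner rectangle. -/
def Verts (r₁ r₂ : ℝ) : Set (ℝ × ℝ) := {(r₁, r₂), (-r₁, r₂), (-r₁, -r₂), (r₁, -r₂)}

/-- The union of the four open sides of the inner boundary `Γ`. -/
def InnerSides (r₁ r₂ : ℝ) : Set (ℝ × ℝ) :=
  {p | (|p.1| < r₁ ∧ |p.2| = r₂) ∨ (|p.1| = r₁ ∧ |p.2| < r₂)}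

/-- `u` is (C² and) harmonic on `s`. -/
def IsHarmonicOn (u : ℝ × ℝ → ℝ) (s : Set (ℝ × ℝ)) : Prop :=
  ContDiffOn ℝ 2 u s ∧ ∀ p ∈ s, pdx (pdx u) p + pdy (pdy u) p = 0

/-- `g` coincides with the gradient of `u` on `s`. -/
def IsGradOn (u : ℝ × ℝ → ℝ) (g : ℝ × ℝ → ℝ × ℝ) (s : Set (ℝ × ℝ)) : Prop :=
  ∀ p ∈ s, g p = (pdx u p, pdy u p)

/-- Mixed boundary data `(a,b)` on the open sides of `Γ`, expressed through the
(extended) gradient `g`:  `u_y = -a` on `Γ₁`, `u_y = a` on `Γ₃`, `u_x = b` on `Γ₂`,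
`u_x = -b` on `Γ₄`. -/
def MixedData (r₁ r₂ a b : ℝ) (g : ℝ × ℝ → ℝ × ℝ) : Prop :=
  (∀ x ∈ Ioo (-r₁) r₁, (g (x, r₂)).2 = -a ∧ (g (x, -r₂)).2 = a) ∧
  (∀ y ∈ Ioo (-r₂) r₂, (g (-r₁, y)).1 = b ∧ (g (r₁, y)).1 = -b)

/-- `u` is symmetric (even in each variable) on `s`. -/
def IsSymmOn (u : ℝ × ℝ → ℝ) (s : Set (ℝ × ℝ)) : Prop :=
  ∀ x y : ℝ, (x, y) ∈ s → u (-x, y) = u (x, y) ∧ u (x, -y) = u (x, y)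

/-- `u` vanishes on the outer boundary `Γ̃ = ∂R₂`. -/
def VanishOuter (r₁ r₂ l : ℝ) (u : ℝ × ℝ → ℝ) : Prop :=
  ∀ p ∈ frontier (Rect (l * r₁) (l * r₂)), u p = 0

/-- Berg's effect: `x·u_x(x,r₂) ≤ 0` on `Γ₁` and `y·u_y(r₁,y) ≤ 0` on `Γ₄`,
expressed through the (extended) gradient `g`. -/
def BergEffect (r₁ r₂ : ℝ) (g : ℝ × ℝ → ℝ × ℝ) : Prop :=
  (∀ x ∈ Ioo (-r₁) r₁, x * (g (x, r₂)).1 ≤ 0) ∧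
  (∀ y ∈ Ioo (-r₂) r₂, y * (g (r₁, y)).2 ≤ 0)

/-- `u`, with gradient extension `g`, is a `C¹(cl Ω)` solution of the mixed problem
(harmonic in `Ω`, zero on `Γ̃`, mixed data `(a,b)` on the open sides of `Γ`,
`u` and `g` continuous up to the closure of `Ω`). -/
def IsC1Sol (r₁ r₂ l a b : ℝ) (u : ℝ × ℝ → ℝ) (g : ℝ × ℝ → ℝ × ℝ) : Prop :=
  ContinuousOn u (closure (Dom r₁ r₂ l)) ∧
  ContinuousOn g (closure (Dom r₁ r₂ l)) ∧
  IsGradOn u g (Dom r₁ r₂ l) ∧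
  IsHarmonicOn u (Dom r₁ r₂ l) ∧
  VanishOuter r₁ r₂ l u ∧
  MixedData r₁ r₂ a b g

/-!
Write `ρ^{2/3} cos(2θ/3)` as `σ = Re (i (e^{-iπ/4} z)^{2/3})`, `z = p - S₁`, with the principal
branch: its cut is the ray `arg z = -3π/4`, which runs into `R₁`, so `σ` is `C¹` on a neighbourhood
of `cl Ω ∩ B(S₁, ε) \ {S₁}`. In `Ω ∩ B(S₁, ε)` the gradient of `u` is `c ∇σ + ∇w`, and by continuity
this identity persists on the sides `Γ₁` and `Γ₄`, where `σ = -(r₁ - x)^{2/3}`, resp.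
`σ = (r₂ - y)^{2/3}`. Thus `u_x(x, r₂) = (2c/3) (r₁ - x)^{-1/3} + w_x(x, r₂)` and
`u_y(r₁, y) = -(2c/3) (r₂ - y)^{-1/3} + w_y(r₁, y)`: the singular term tends to `+∞` when `c > 0`,
resp. `c < 0`, while `∇w` stays bounded near `S₁`.
-/

open Complex Filter Topology

noncomputable def cornerHarm (z : ℂ) : ℝ := (I * (cexp (-(π / 4) * I) * z) ^ (2 / 3 : ℂ)).re

lemma cexp_neg_pi_div_four_mul_mem_slitPlane {z : ℂ} (hz : z ≠ 0) (h : 0 ≤ z.re ∨ 0 ≤ z.im) :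
    cexp (-(π / 4) * I) * z ∈ slitPlane := by
  have hre : (cexp (-(π / 4) * I) * z).re = √2 / 2 * (z.re + z.im) := by
    simp [Complex.mul_re, Complex.exp_re, Complex.exp_im]; ring
  have him : (cexp (-(π / 4) * I) * z).im = √2 / 2 * (z.im - z.re) := by
    simp [Complex.mul_im, Complex.exp_re, Complex.exp_im]; ring
  have hs : 0 < √2 / 2 := by positivity
  rw [mem_slitPlane_iff, hre, him]
  by_contra! hcon
  have hdiag : z.im = z.re := by
    have := (mul_eq_zero.mp hcon.2).resolve_left hs.ne'
    linarith
  have hnp : z.re + z.im ≤ 0 := nonpos_of_mul_nonpos_right hcon.1 hs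
  exact hz (by apply Complex.ext <;> simp <;> rcases h with h | h <;> linarith)

lemma contDiffAt_cornerHarm {z : ℂ} (hz : cexp (-(π / 4) * I) * z ∈ slitPlane) :
    ContDiffAt ℝ 1 cornerHarm z := by
  have hpow : AnalyticAt ℂ (fun z => I * (cexp (-(π / 4) * I) * z) ^ (2 / 3 : ℂ)) z := by
    fun_prop (disch := exact hz)
  exact reCLM.contDiff.contDiffAt.comp z (hpow.contDiffAt.restrict_scalars ℝ)

lemma cornerHarm_polar {ρ θ : ℝ} (hρ : 0 < ρ) (hθ₀ : 0 ≤ θ) (hθ₁ : θ ≤ 3 * π / 2) :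
    cornerHarm ⟨ρ * Real.sin θ, -(ρ * Real.cos θ)⟩ = ρ ^ ((2 : ℝ) / 3) * Real.cos (2 * θ / 3) := by
  have hpolar : (⟨ρ * Real.sin θ, -(ρ * Real.cos θ)⟩ : ℂ) =
      cexp (Real.log ρ + (θ - π / 2 : ℝ) * I) := by
    apply Complex.ext <;>
      simp [Complex.exp_re, Complex.exp_im, Real.exp_log hρ, Real.cos_sub_pi_div_two,
        Real.sin_sub_pi_div_two]
  set x : ℂ := Real.log ρ + (θ - 3 * π / 4 : ℝ) * I
  have hrot : cexp (-(π / 4) * I) * ⟨ρ * Real.sin θ, -(ρ * Real.cos θ)⟩ = cexp x := by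
    rw [hpolar, ← Complex.exp_add]; congr 1; simp only [x]; push_cast; ring
  have hlog : Complex.log (cexp x) = x := by
    apply Complex.log_exp <;> simp [x] <;> linarith [Real.pi_pos]
  rw [cornerHarm, hrot, cpow_def_of_ne_zero (Complex.exp_ne_zero x), hlog]
  have hsin : Real.sin ((θ - 3 * π / 4) * (2 / 3)) = -Real.cos (2 * θ / 3) := by
    rw [show (θ - 3 * π / 4) * (2 / 3) = 2 * θ / 3 - π / 2 by ring, Real.sin_sub_pi_div_two]
  simp [x, Complex.mul_re, Complex.exp_im, hsin, Real.rpow_def_of_pos hρ]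

noncomputable def cornerSing (S p : ℝ × ℝ) : ℝ := cornerHarm (equivRealProdCLM.symm (p - S))

lemma cornerSing_polar (r₁ r₂ : ℝ) {ρ θ : ℝ} (hρ : 0 < ρ) (hθ₀ : 0 ≤ θ) (hθ₁ : θ ≤ 3 * π / 2) :
    cornerSing (r₁, r₂) (r₁ + ρ * Real.sin θ, r₂ - ρ * Real.cos θ) =
      ρ ^ ((2 : ℝ) / 3) * Real.cos (2 * θ / 3) := by
  rw [← cornerHarm_polar hρ hθ₀ hθ₁, cornerSing]
  congr 1
  apply Complex.ext <;>
    simp [equivRealProdCLM_symm_apply, Complex.sin_ofReal_re, Complex.cos_ofReal_re]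

lemma cornerSing_top_side (r₁ r₂ : ℝ) {x : ℝ} (hx : x < r₁) :
    cornerSing (r₁, r₂) (x, r₂) = -(r₁ - x) ^ ((2 : ℝ) / 3) := by
  have h := cornerSing_polar r₁ r₂ (sub_pos.mpr hx) (by positivity) le_rfl
  have hθ : 3 * π / 2 = π / 2 + π := by ring
  rw [hθ, Real.sin_add_pi, Real.cos_add_pi, Real.sin_pi_div_two, Real.cos_pi_div_two,
    show 2 * (π / 2 + π) / 3 = π by ring, Real.cos_pi] at h
  simpa using h

lemma cornerSing_right_side (r₁ r₂ : ℝ) {y : ℝ} (hy : y < r₂) :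
    cornerSing (r₁, r₂) (r₁, y) = (r₂ - y) ^ ((2 : ℝ) / 3) := by
  simpa using cornerSing_polar r₁ r₂ (sub_pos.mpr hy) le_rfl (by positivity)

lemma contDiffAt_cornerSing {S p : ℝ × ℝ} (hp : p ≠ S) (h : S.1 ≤ p.1 ∨ S.2 ≤ p.2) :
    ContDiffAt ℝ 1 (cornerSing S) p := by
  have hz : equivRealProdCLM.symm (p - S) ≠ 0 := by simpa [sub_eq_zero] using hp
  have hslit := cexp_neg_pi_div_four_mul_mem_slitPlane hz
    (by simpa [equivRealProdCLM_symm_apply] using h)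
  exact (contDiffAt_cornerHarm hslit).comp p
    (equivRealProdCLM.symm.contDiff.comp (contDiff_id.sub contDiff_const)).contDiffAt

lemma hasDerivAt_pdx {u : ℝ × ℝ → ℝ} {x y : ℝ} (h : DifferentiableAt ℝ u (x, y)) :
    HasDerivAt (fun t => u (t, y)) (pdx u (x, y)) x :=
  h.hasFDerivAt.comp_hasDerivAt x ((hasDerivAt_id x).prodMk (hasDerivAt_const x y))

lemma hasDerivAt_pdy {u : ℝ × ℝ → ℝ} {x y : ℝ} (h : DifferentiableAt ℝ u (x, y)) :
    HasDerivAt (fun t => u (x, t)) (pdy u (x, y)) y :=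
  h.hasFDerivAt.comp_hasDerivAt y ((hasDerivAt_const y x).prodMk (hasDerivAt_id y))

lemma pdx_cornerSing_top_side {r₁ r₂ x : ℝ} (hx : x < r₁) :
    pdx (cornerSing (r₁, r₂)) (x, r₂) = 2 / 3 * (r₁ - x) ^ (-(1 : ℝ) / 3) := by
  have hdiff : DifferentiableAt ℝ (cornerSing (r₁, r₂)) (x, r₂) :=
    (contDiffAt_cornerSing (S := (r₁, r₂)) (p := (x, r₂)) (fun h => hx.ne (congrArg Prod.fst h))
      (Or.inr le_rfl)).differentiableAt one_ne_zero
  have hside : (fun t => cornerSing (r₁, r₂) (t, r₂)) =ᶠ[𝓝 x]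
      fun t => -(r₁ - t) ^ ((2 : ℝ) / 3) := by
    filter_upwards [Iio_mem_nhds hx] with t ht using cornerSing_top_side r₁ r₂ ht
  have hpow := (((hasDerivAt_id x).const_sub r₁).rpow_const (p := (2 : ℝ) / 3)
    (Or.inl (sub_pos.mpr hx).ne')).neg
  refine (hasDerivAt_pdx hdiff).unique (hpow.congr_of_eventuallyEq hside) |>.trans ?_
  norm_num

lemma pdy_cornerSing_right_side {r₁ r₂ y : ℝ} (hy : y < r₂) :
    pdy (cornerSing (r₁, r₂)) (r₁, y) = -(2 / 3 * (r₂ - y) ^ (-(1 : ℝ) / 3)) := by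
  have hdiff : DifferentiableAt ℝ (cornerSing (r₁, r₂)) (r₁, y) :=
    (contDiffAt_cornerSing (S := (r₁, r₂)) (p := (r₁, y)) (fun h => hy.ne (congrArg Prod.snd h))
      (Or.inl le_rfl)).differentiableAt one_ne_zero
  have hside : (fun t => cornerSing (r₁, r₂) (r₁, t)) =ᶠ[𝓝 y]
      fun t => (r₂ - t) ^ ((2 : ℝ) / 3) := by
    filter_upwards [Iio_mem_nhds hy] with t ht using cornerSing_right_side r₁ r₂ ht
  have hpow := ((hasDerivAt_id y).const_sub r₂).rpow_const (p := (2 : ℝ) / 3)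
    (Or.inl (sub_pos.mpr hy).ne')
  refine (hasDerivAt_pdy hdiff).unique (hpow.congr_of_eventuallyEq hside) |>.trans ?_
  norm_num

lemma continuousOn_grad_cornerSing (S : ℝ × ℝ) :
    ContinuousOn (fun p => (pdx (cornerSing S) p, pdy (cornerSing S) p))
      {p | p ≠ S ∧ (S.1 ≤ p.1 ∨ S.2 ≤ p.2)} := by
  intro p hp
  have hfd := ((contDiffAt_cornerSing hp.1 hp.2).fderiv_right (m := 0) le_rfl).continuousAt
  exact ((hfd.clm_apply continuousAt_const).prodMk
    (hfd.clm_apply continuousAt_const)).continuousWithinAt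

lemma exists_polar_of_le_or_le {r₁ r₂ : ℝ} {p : ℝ × ℝ} (hp : p ≠ (r₁, r₂))
    (h : r₁ ≤ p.1 ∨ r₂ ≤ p.2) :
    ∃ ρ θ : ℝ, 0 < ρ ∧ 0 ≤ θ ∧ θ ≤ 3 * π / 2 ∧
      p = (r₁ + ρ * Real.sin θ, r₂ - ρ * Real.cos θ) := by
  set z : ℂ := ⟨p.1 - r₁, p.2 - r₂⟩
  have hz : z ≠ 0 := by
    intro h0
    have hre := congrArg re h0
    have him := congrArg im h0
    simp only [z, zero_re, zero_im, sub_eq_zero] at hre him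
    exact hp (Prod.ext hre him)
  have harg : -(π / 2) ≤ arg z := neg_pi_div_two_le_arg_iff.mpr (by simpa [z] using h)
  refine ⟨‖z‖, arg z + π / 2, norm_pos_iff.mpr hz, by linarith, by linarith [arg_le_pi z], ?_⟩
  rw [Real.sin_add_pi_div_two, Real.cos_add_pi_div_two, norm_mul_cos_arg, mul_neg,
    norm_mul_sin_arg]
  ext <;> simp [z]

lemma eqOn_cornerSing_of_polar {r₁ r₂ c : ℝ} {u w : ℝ × ℝ → ℝ} {s : Set (ℝ × ℝ)}
    (hs : ∀ p ∈ s, p ≠ (r₁, r₂) ∧ (r₁ ≤ p.1 ∨ r₂ ≤ p.2))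
    (hdecomp : ∀ ρ θ : ℝ, 0 < ρ → 0 ≤ θ → θ ≤ 3 * π / 2 →
      (r₁ + ρ * Real.sin θ, r₂ - ρ * Real.cos θ) ∈ s →
      u (r₁ + ρ * Real.sin θ, r₂ - ρ * Real.cos θ) =
        c * ρ ^ ((2 : ℝ) / 3) * Real.cos (2 * θ / 3) +
          w (r₁ + ρ * Real.sin θ, r₂ - ρ * Real.cos θ)) :
    EqOn u (fun p => c * cornerSing (r₁, r₂) p + w p) s := by
  intro p hp
  obtain ⟨ρ, θ, hρ, hθ₀, hθ₁, rfl⟩ := exists_polar_of_le_or_le (hs p hp).1 (hs p hp).2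
  dsimp only
  rw [hdecomp ρ θ hρ hθ₀ hθ₁ hp, cornerSing_polar r₁ r₂ hρ hθ₀ hθ₁, mul_assoc]

lemma IsGradOn.eqOn_smul_add {u σ w : ℝ × ℝ → ℝ} {g gw : ℝ × ℝ → ℝ × ℝ} {s : Set (ℝ × ℝ)}
    {c : ℝ} (hs : IsOpen s) (hu : DifferentiableOn ℝ u s) (hσ : DifferentiableOn ℝ σ s)
    (hdec : EqOn u (fun p => c * σ p + w p) s) (hg : IsGradOn u g s) (hgw : IsGradOn w gw s) :
    EqOn g (fun p => c • (pdx σ p, pdy σ p) + gw p) s := by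
  intro p hp
  have hu' := hu.differentiableAt (hs.mem_nhds hp)
  have hσ' := hσ.differentiableAt (hs.mem_nhds hp)
  have hw : w =ᶠ[𝓝 p] fun q => u q - c * σ q := by
    filter_upwards [hs.mem_nhds hp] with q hq
    rw [hdec hq]; ring
  have hfd : fderiv ℝ w p = fderiv ℝ u p - c • fderiv ℝ σ p := by
    rw [hw.fderiv_eq]
    exact (hu'.hasFDerivAt.sub (hσ'.hasFDerivAt.const_mul c)).fderiv
  simp only [hg p hp, hgw p hp, pdx, pdy, hfd]
  ext <;> simp

def cornerNbhd (r₁ r₂ ε : ℝ) : Set (ℝ × ℝ) :=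
  Metric.ball (r₁, r₂) ε \ (Icc (-r₁) r₁ ×ˢ Icc (-r₂) r₂)

section cornerNbhd

variable {r₁ r₂ ε : ℝ}

lemma isOpen_cornerNbhd : IsOpen (cornerNbhd r₁ r₂ ε) :=
  Metric.isOpen_ball.sdiff (isClosed_Icc.prod isClosed_Icc)

lemma cornerNbhd_subset_dom {l δ : ℝ} (hεδ : ε ≤ δ) (hε₁ : ε ≤ r₁) (hε₂ : ε ≤ r₂)
    (hl₁ : ε ≤ (l - 1) * r₁) (hl₂ : ε ≤ (l - 1) * r₂) :
    cornerNbhd r₁ r₂ ε ⊆ Dom r₁ r₂ l ∩ Metric.ball (r₁, r₂) δ := by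
  rintro p ⟨hball, hout⟩
  have hcoord := hball
  simp only [Metric.mem_ball, Prod.dist_eq, max_lt_iff, Real.dist_eq, abs_lt] at hcoord
  exact ⟨⟨⟨⟨by linarith, by linarith⟩, by linarith, by linarith⟩, hout⟩,
    Metric.ball_subset_ball hεδ hball⟩

lemma le_or_le_of_mem_closure_cornerNbhd (hε : 0 < ε) (hε₁ : ε ≤ r₁) (hε₂ : ε ≤ r₂)
    {p : ℝ × ℝ} (hp : p ∈ closure (cornerNbhd r₁ r₂ ε)) : r₁ ≤ p.1 ∨ r₂ ≤ p.2 := by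
  have hclosed : IsClosed (Metric.closedBall (r₁, r₂) ε ∩ (Ioo (-r₁) r₁ ×ˢ Ioo (-r₂) r₂)ᶜ) :=
    Metric.isClosed_closedBall.inter (isOpen_Ioo.prod isOpen_Ioo).isClosed_compl
  have hsub : cornerNbhd r₁ r₂ ε ⊆ Metric.closedBall (r₁, r₂) ε ∩ (Ioo (-r₁) r₁ ×ˢ Ioo (-r₂) r₂)ᶜ :=
    fun q hq => ⟨Metric.ball_subset_closedBall hq.1,
      fun hIoo => hq.2 ⟨Ioo_subset_Icc_self hIoo.1, Ioo_subset_Icc_self hIoo.2⟩⟩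
  obtain ⟨hball, hout⟩ := hclosed.closure_subset_iff.mpr hsub hp
  simp only [Metric.mem_closedBall, Prod.dist_eq, max_le_iff, Real.dist_eq, abs_le] at hball
  simp only [mem_compl_iff, mem_prod, mem_Ioo, not_and_or, not_lt] at hout
  rcases hout with (h | h) | (h | h) <;> first | (left; linarith) | (right; linarith)

lemma mem_closure_cornerNbhd_top_side {x : ℝ} (hx : x ∈ Ioc (r₁ - ε) r₁) :
    (x, r₂) ∈ closure (cornerNbhd r₁ r₂ ε) := by
  have hε : 0 < ε := by linarith [hx.1, hx.2]
  have hbox : Ioo (r₁ - ε) (r₁ + ε) ×ˢ Ioo r₂ (r₂ + ε) ⊆ cornerNbhd r₁ r₂ ε := by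
    rintro q ⟨hq₁, hq₂⟩
    refine ⟨?_, fun hq => hq₂.1.not_ge hq.2.2⟩
    rw [← ball_prod_same, Real.ball_eq_Ioo, Real.ball_eq_Ioo]
    exact ⟨hq₁, Ioo_subset_Ioo_left (by linarith) hq₂⟩
  refine closure_mono hbox ?_
  rw [closure_prod_eq, closure_Ioo (by linarith), closure_Ioo (by linarith)]
  exact ⟨⟨hx.1.le, by linarith [hx.2]⟩, le_rfl, by linarith⟩

lemma mem_closure_cornerNbhd_right_side {y : ℝ} (hy : y ∈ Ioc (r₂ - ε) r₂) :
    (r₁, y) ∈ closure (cornerNbhd r₁ r₂ ε) := by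
  have hε : 0 < ε := by linarith [hy.1, hy.2]
  have hbox : Ioo r₁ (r₁ + ε) ×ˢ Ioo (r₂ - ε) (r₂ + ε) ⊆ cornerNbhd r₁ r₂ ε := by
    rintro q ⟨hq₁, hq₂⟩
    refine ⟨?_, fun hq => hq₁.1.not_ge hq.1.2⟩
    rw [← ball_prod_same, Real.ball_eq_Ioo, Real.ball_eq_Ioo]
    exact ⟨Ioo_subset_Ioo_left (by linarith) hq₁, hq₂⟩
  refine closure_mono hbox ?_
  rw [closure_prod_eq, closure_Ioo (by linarith), closure_Ioo (by linarith)]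
  exact ⟨⟨le_rfl, by linarith⟩, hy.1.le, by linarith [hy.2]⟩

lemma closure_cornerNbhd_diff_subset {l : ℝ} (hε : 0 < ε) (hε₁ : ε ≤ r₁) (hε₂ : ε ≤ r₂)
    (hN : cornerNbhd r₁ r₂ ε ⊆ Dom r₁ r₂ l) :
    closure (cornerNbhd r₁ r₂ ε) \ {(r₁, r₂)} ⊆ closure (Dom r₁ r₂ l) \ Verts r₁ r₂ := by
  rintro p ⟨hp, hS⟩
  refine ⟨closure_mono hN hp, ?_⟩
  have hball : p ∈ Metric.closedBall (r₁, r₂) ε :=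
    closure_minimal (fun q hq => Metric.ball_subset_closedBall hq.1) Metric.isClosed_closedBall hp
  simp only [Metric.mem_closedBall, Prod.dist_eq, max_le_iff, Real.dist_eq, abs_le] at hball
  simp only [Verts, mem_insert_iff, mem_singleton_iff] at hS ⊢
  rintro (h | h | h | h) <;> simp only [h] at hball <;> first | exact hS h | linarith

end cornerNbhd

lemma tendsto_rpow_neg_third_sub_nhdsLT (a : ℝ) :
    Tendsto (fun x => (a - x) ^ (-(1 : ℝ) / 3)) (𝓝[<] a) atTop := by
  have hsub : Tendsto (fun x => a - x) (𝓝[<] a) (𝓝[>] 0) := by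
    refine tendsto_nhdsWithin_iff.mpr
      ⟨?_, eventually_nhdsWithin_of_forall fun x hx => sub_pos.mpr (mem_Iio.mp hx)⟩
    have h := ((continuous_sub_left a).tendsto a).mono_left (nhdsWithin_le_nhds (s := Iio a))
    rwa [sub_self] at h
  exact (tendsto_rpow_neg_nhdsGT_zero (by norm_num)).comp hsub

lemma exists_Ioo_pos_of_tendsto_atTop {f : ℝ → ℝ} {a : ℝ} (ha : 0 < a)
    (hf : Tendsto f (𝓝[<] a) atTop) :
    ∃ δ₁ > 0, ∀ x ∈ Ioo (a - δ₁) a, 0 < f x ∧ 0 < x * f x := by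
  have hev : ∀ᶠ x in 𝓝[<] a, 0 < x ∧ 0 < f x :=
    (eventually_nhdsWithin_of_eventually_nhds (lt_mem_nhds ha)).and (hf.eventually_gt_atTop 0)
  obtain ⟨b, hb, hsub⟩ := mem_nhdsLT_iff_exists_Ioo_subset.mp hev
  refine ⟨a - b, sub_pos.mpr hb, fun x hx => ?_⟩
  obtain ⟨hx, hfx⟩ := hsub ⟨by linarith [hx.1], hx.2⟩
  exact ⟨hfx, mul_pos hx hfx⟩

lemma grad_eqOn_closure_cornerNbhd {r₁ r₂ l δ ε c : ℝ} {u w : ℝ × ℝ → ℝ}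
    {g gw : ℝ × ℝ → ℝ × ℝ} (hε : 0 < ε) (hεδ : ε ≤ δ) (hε₁ : ε ≤ r₁) (hε₂ : ε ≤ r₂)
    (hl₁ : ε ≤ (l - 1) * r₁) (hl₂ : ε ≤ (l - 1) * r₂)
    (hu : DifferentiableOn ℝ u (Dom r₁ r₂ l))
    (hg : ContinuousOn g (closure (Dom r₁ r₂ l) \ Verts r₁ r₂))
    (hgrad : IsGradOn u g (Dom r₁ r₂ l))
    (hgw : ContinuousOn gw (closure (Dom r₁ r₂ l ∩ Metric.ball (r₁, r₂) δ)))
    (hgradw : IsGradOn w gw (Dom r₁ r₂ l ∩ Metric.ball (r₁, r₂) δ))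
    (hdecomp : ∀ ρ θ : ℝ, 0 < ρ → 0 ≤ θ → θ ≤ 3 * π / 2 →
      (r₁ + ρ * Real.sin θ, r₂ - ρ * Real.cos θ) ∈ Dom r₁ r₂ l ∩ Metric.ball (r₁, r₂) δ →
      u (r₁ + ρ * Real.sin θ, r₂ - ρ * Real.cos θ) =
        c * ρ ^ ((2 : ℝ) / 3) * Real.cos (2 * θ / 3) +
          w (r₁ + ρ * Real.sin θ, r₂ - ρ * Real.cos θ)) :
    EqOn g (fun p => c • (pdx (cornerSing (r₁, r₂)) p, pdy (cornerSing (r₁, r₂)) p) + gw p)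
      (closure (cornerNbhd r₁ r₂ ε) \ {(r₁, r₂)}) := by
  have hN := cornerNbhd_subset_dom hεδ hε₁ hε₂ hl₁ hl₂
  have hcorner : ∀ p ∈ closure (cornerNbhd r₁ r₂ ε) \ {(r₁, r₂)},
      p ≠ (r₁, r₂) ∧ (r₁ ≤ p.1 ∨ r₂ ≤ p.2) :=
    fun p hp => ⟨hp.2, le_or_le_of_mem_closure_cornerNbhd hε hε₁ hε₂ hp.1⟩
  have hNsub : cornerNbhd r₁ r₂ ε ⊆ closure (cornerNbhd r₁ r₂ ε) \ {(r₁, r₂)} := by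
    refine fun p hp => ⟨subset_closure hp, ?_⟩
    rintro rfl
    exact hp.2 ⟨⟨by linarith, le_rfl⟩, by linarith, le_rfl⟩
  have hσ : DifferentiableOn ℝ (cornerSing (r₁, r₂)) (cornerNbhd r₁ r₂ ε) := fun p hp =>
    ((contDiffAt_cornerSing (hcorner p (hNsub hp)).1 (hcorner p (hNsub hp)).2).differentiableAt
      one_ne_zero).differentiableWithinAt
  have hOnN := IsGradOn.eqOn_smul_add isOpen_cornerNbhd (hu.mono (hN.trans inter_subset_left)) hσ
    (eqOn_cornerSing_of_polar (fun p hp => hcorner p (hNsub hp))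
      fun ρ θ hρ hθ₀ hθ₁ hmem => hdecomp ρ θ hρ hθ₀ hθ₁ (hN hmem))
    (fun p hp => hgrad p (hN hp).1) (fun p hp => hgradw p (hN hp))
  refine hOnN.of_subset_closure
    (hg.mono (closure_cornerNbhd_diff_subset hε hε₁ hε₂ (hN.trans inter_subset_left)))
    ((((continuousOn_grad_cornerSing _).mono hcorner).const_smul c).add
      (hgw.mono ((sdiff_subset).trans (closure_mono hN))))
    hNsub sdiff_subset

section sides

variable {r₁ r₂ ε c : ℝ} {g gw : ℝ × ℝ → ℝ × ℝ}

lemma tendsto_fst_top_side_of_eqOn (hε : 0 < ε) (hc : 0 < c)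
    (heq : EqOn g (fun p => c • (pdx (cornerSing (r₁, r₂)) p, pdy (cornerSing (r₁, r₂)) p) + gw p)
      (closure (cornerNbhd r₁ r₂ ε) \ {(r₁, r₂)}))
    (hgw : ContinuousWithinAt gw (closure (cornerNbhd r₁ r₂ ε)) (r₁, r₂)) :
    Tendsto (fun x => (g (x, r₂)).1) (𝓝[<] r₁) atTop := by
  have hside : Ioo (r₁ - ε) r₁ ∈ 𝓝[<] r₁ := Ioo_mem_nhdsLT (by linarith)
  have hpath : Tendsto (fun x => (x, r₂)) (𝓝[<] r₁) (𝓝[closure (cornerNbhd r₁ r₂ ε)] (r₁, r₂)) :=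
    tendsto_nhdsWithin_iff.mpr ⟨((Continuous.prodMk_left r₂).tendsto r₁).mono_left
      nhdsWithin_le_nhds, mem_of_superset hside fun x hx =>
        mem_closure_cornerNbhd_top_side ⟨hx.1, hx.2.le⟩⟩
  have hev : ∀ᶠ x in 𝓝[<] r₁,
      c * (2 / 3) * (r₁ - x) ^ (-(1 : ℝ) / 3) + (gw (x, r₂)).1 = (g (x, r₂)).1 := by
    filter_upwards [hside] with x hx
    rw [heq ⟨mem_closure_cornerNbhd_top_side ⟨hx.1, hx.2.le⟩,
      fun h => hx.2.ne (congrArg Prod.fst h)⟩]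
    simp [pdx_cornerSing_top_side hx.2]
    ring
  exact (((tendsto_rpow_neg_third_sub_nhdsLT r₁).const_mul_atTop (by positivity)).atTop_add
    ((continuous_fst.tendsto _).comp (hgw.tendsto.comp hpath))).congr' hev

lemma tendsto_snd_right_side_of_eqOn (hε : 0 < ε) (hc : c < 0)
    (heq : EqOn g (fun p => c • (pdx (cornerSing (r₁, r₂)) p, pdy (cornerSing (r₁, r₂)) p) + gw p)
      (closure (cornerNbhd r₁ r₂ ε) \ {(r₁, r₂)}))
    (hgw : ContinuousWithinAt gw (closure (cornerNbhd r₁ r₂ ε)) (r₁, r₂)) :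
    Tendsto (fun y => (g (r₁, y)).2) (𝓝[<] r₂) atTop := by
  have hside : Ioo (r₂ - ε) r₂ ∈ 𝓝[<] r₂ := Ioo_mem_nhdsLT (by linarith)
  have hpath : Tendsto (fun y => (r₁, y)) (𝓝[<] r₂) (𝓝[closure (cornerNbhd r₁ r₂ ε)] (r₁, r₂)) :=
    tendsto_nhdsWithin_iff.mpr ⟨((Continuous.prodMk_right r₁).tendsto r₂).mono_left
      nhdsWithin_le_nhds, mem_of_superset hside fun y hy =>
        mem_closure_cornerNbhd_right_side ⟨hy.1, hy.2.le⟩⟩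
  have hev : ∀ᶠ y in 𝓝[<] r₂,
      -c * (2 / 3) * (r₂ - y) ^ (-(1 : ℝ) / 3) + (gw (r₁, y)).2 = (g (r₁, y)).2 := by
    filter_upwards [hside] with y hy
    rw [heq ⟨mem_closure_cornerNbhd_right_side ⟨hy.1, hy.2.le⟩,
      fun h => hy.2.ne (congrArg Prod.snd h)⟩]
    simp [pdy_cornerSing_right_side hy.2]
    ring
  exact (((tendsto_rpow_neg_third_sub_nhdsLT r₂).const_mul_atTop
    (by linarith)).atTop_add ((continuous_snd.tendsto _).comp (hgw.tendsto.comp hpath))).congr' hev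

end sides

theorem stmt_2_general (r₁ r₂ l : ℝ) (hr₁ : 0 < r₁) (hr₂ : 0 < r₂) (hl : 1 < l)
    (u : ℝ × ℝ → ℝ) (g : ℝ × ℝ → ℝ × ℝ)
    (hharm : IsHarmonicOn u (Dom r₁ r₂ l))
    (hg : ContinuousOn g (closure (Dom r₁ r₂ l) \ Verts r₁ r₂))
    (hgrad : IsGradOn u g (Dom r₁ r₂ l))
    (δ : ℝ) (hδ : 0 < δ) (c : ℝ)
    (w : ℝ × ℝ → ℝ) (gw : ℝ × ℝ → ℝ × ℝ)
    (hgw : ContinuousOn gw (closure (Dom r₁ r₂ l ∩ Metric.ball (r₁, r₂) δ)))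
    (hgradw : IsGradOn w gw (Dom r₁ r₂ l ∩ Metric.ball (r₁, r₂) δ))
    (hdecomp : ∀ ρ θ : ℝ, 0 < ρ → 0 ≤ θ → θ ≤ 3 * π / 2 →
      (r₁ + ρ * Real.sin θ, r₂ - ρ * Real.cos θ) ∈ Dom r₁ r₂ l ∩ Metric.ball (r₁, r₂) δ →
      u (r₁ + ρ * Real.sin θ, r₂ - ρ * Real.cos θ) =
        c * ρ ^ ((2 : ℝ) / 3) * Real.cos (2 * θ / 3) +
          w (r₁ + ρ * Real.sin θ, r₂ - ρ * Real.cos θ)) :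
    (0 < c → ∃ δ₁ > 0, ∀ x ∈ Ioo (r₁ - δ₁) r₁,
      0 < (g (x, r₂)).1 ∧ 0 < x * (g (x, r₂)).1) ∧
    (c < 0 → ∃ δ₁ > 0, ∀ y ∈ Ioo (r₂ - δ₁) r₂,
      0 < (g (r₁, y)).2 ∧ 0 < y * (g (r₁, y)).2) := by
  have hl' : 0 < l - 1 := sub_pos.mpr hl
  obtain ⟨ε, hε, hεδ, hε₁, hε₂, hl₁, hl₂⟩ : ∃ ε > 0, ε ≤ δ ∧ ε ≤ r₁ ∧ ε ≤ r₂ ∧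
      ε ≤ (l - 1) * r₁ ∧ ε ≤ (l - 1) * r₂ :=
    ⟨min (min δ (min r₁ r₂)) (min ((l - 1) * r₁) ((l - 1) * r₂)), by positivity,
      by simp⟩
  have hN := cornerNbhd_subset_dom hεδ hε₁ hε₂ hl₁ hl₂
  have heq := grad_eqOn_closure_cornerNbhd hε hεδ hε₁ hε₂ hl₁ hl₂
    (hharm.1.differentiableOn (by norm_num)) hg hgrad hgw hgradw hdecomp
  have hgwS : ContinuousWithinAt gw (closure (cornerNbhd r₁ r₂ ε)) (r₁, r₂) :=
    hgw.mono (closure_mono hN) _ (mem_closure_cornerNbhd_top_side ⟨by linarith, le_rfl⟩)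
  exact ⟨fun hc => exists_Ioo_pos_of_tendsto_atTop hr₁
      (tendsto_fst_top_side_of_eqOn hε hc heq hgwS),
    fun hc => exists_Ioo_pos_of_tendsto_atTop hr₂
      (tendsto_snd_right_side_of_eqOn hε hc heq hgwS)⟩

/-- if the singular coefficient `c` is nonzero, Berg's effect fails near `S₁`. -/
theorem stmt_2 (r₁ r₂ l a b : ℝ) (hr₁ : 0 < r₁) (hr₂ : 0 < r₂) (hl : 1 < l)
    (ha : 0 < a) (hb : 0 < b)
    (u : ℝ × ℝ → ℝ) (g : ℝ × ℝ → ℝ × ℝ)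
    (hu : ContinuousOn u (closure (Dom r₁ r₂ l)))
    (hharm : IsHarmonicOn u (Dom r₁ r₂ l))
    (hg : ContinuousOn g (closure (Dom r₁ r₂ l) \ Verts r₁ r₂))
    (hgrad : IsGradOn u g (Dom r₁ r₂ l))
    (hdata : MixedData r₁ r₂ a b g)
    (δ : ℝ) (hδ : 0 < δ) (c : ℝ) (hc : c ≠ 0)
    (w : ℝ × ℝ → ℝ) (gw : ℝ × ℝ → ℝ × ℝ)
    (hw : ContinuousOn w (closure (Dom r₁ r₂ l ∩ Metric.ball (r₁, r₂) δ)))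
    (hgw : ContinuousOn gw (closure (Dom r₁ r₂ l ∩ Metric.ball (r₁, r₂) δ)))
    (hgradw : IsGradOn w gw (Dom r₁ r₂ l ∩ Metric.ball (r₁, r₂) δ))
    (hwx : (gw (r₁, r₂)).1 < 0) (hwy : (gw (r₁, r₂)).2 < 0)
    (hdecomp : ∀ ρ θ : ℝ, 0 < ρ → 0 ≤ θ → θ ≤ 3 * π / 2 →
      (r₁ + ρ * Real.sin θ, r₂ - ρ * Real.cos θ) ∈ Dom r₁ r₂ l ∩ Metric.ball (r₁, r₂) δ →
      u (r₁ + ρ * Real.sin θ, r₂ - ρ * Real.cos θ) =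
        c * ρ ^ ((2 : ℝ) / 3) * Real.cos (2 * θ / 3) +
          w (r₁ + ρ * Real.sin θ, r₂ - ρ * Real.cos θ)) :
    (0 < c → ∃ δ₁ > 0, ∀ x ∈ Ioo (r₁ - δ₁) r₁,
      0 < (g (x, r₂)).1 ∧ 0 < x * (g (x, r₂)).1) ∧
    (c < 0 → ∃ δ₁ > 0, ∀ y ∈ Ioo (r₂ - δ₁) r₂,
      0 < (g (r₁, y)).2 ∧ 0 < y * (g (r₁, y)).2) :=
  stmt_2_general r₁ r₂ l hr₁ hr₂ hl u g hharm hg hgrad δ hδ c w gw hgw hgradw hdecomp
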